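/- arXiv:1504.02627 — 7 statements merged into one kernel-verified Lean document; each statement's English description precedes it below -/
import Mathlib

section
/- For any delay function f and any open language L ⊆ (Σ_I × Σ_O)^ω (i.e., L ∈ Σ_1 of the Borel hierarchy, meaning L = K·(Σ_I × Σ_O)^ω for some set K of finite words), the language shift_f(L) is in Π_2, i.e., it is a countable intersection of open sets in the Cantor space over Σ_I × (Σ_O ∪ {▷}). -/
open scoped Classical MeasureTheory

section DelayGames

variable {I O A B : Type}

/-- `shiftSeq f β = ▷^{f 0 - 1} β 0 ▷^{f 1 - 1} β 1 ⋯`, where the skip symbol `▷`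
is modeled by `none` and a letter `b ∈ Σ_O` by `some b`. -/
noncomputable def shiftSeq (f : ℕ → ℕ) (β : ℕ → O) : ℕ → Option O := fun n =>
  if h : ∃ i, (∑ j ∈ Finset.range (i + 1), f j) = n + 1 then some (β (Nat.find h))
  else none

/-- `shift_f(L) = { (α, shift_f(β)) : (α, β) ∈ L }`. -/
def shiftLang (f : ℕ → ℕ) (L : Set ((ℕ → I) × (ℕ → O))) :
    Set ((ℕ → I) × (ℕ → Option O)) :=
  {p | ∃ β : ℕ → O, (p.1, β) ∈ L ∧ p.2 = shiftSeq f β}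

/-- The morphism `h` erasing the skip symbol, applied to an infinite word
(meaningful when the word has infinitely many non-skip letters). -/
noncomputable def eraseSkips [Inhabited O] (β : ℕ → Option O) : ℕ → O := fun n =>
  (β (Nat.nth (fun k => (β k).isSome) n)).getD default

/-- `skip(L) = ⋃_f shift_f(L) = { (α,β) : β has infinitely many non-▷ letters and (α, h β) ∈ L }`. -/
def skipLang [Inhabited O] (L : Set ((ℕ → I) × (ℕ → O))) :
    Set ((ℕ → I) × (ℕ → Option O)) :=
  {p | {k | (p.2 k).isSome}.Infinite ∧ (p.1, eraseSkips p.2) ∈ L}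

/-- A play of a Gale-Stewart game is consistent with the Player O strategy `σ`. -/
def gsConsO (σ : List A → B) (α : ℕ → A) (β : ℕ → B) : Prop :=
  ∀ i, β i = σ (List.ofFn fun j : Fin (i + 1) => α j)

/-- A play of a Gale-Stewart game is consistent with the Player I strategy `τ`. -/
def gsConsI (τ : List B → A) (α : ℕ → A) (β : ℕ → B) : Prop :=
  ∀ i, α i = τ (List.ofFn fun j : Fin i => β j)

/-- `σ` is a winning strategy for Player O in the Gale-Stewart game with winning condition `W`. -/
def gsWinO (W : Set ((ℕ → A) × (ℕ → B))) (σ : List A → B) : Prop :=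
  ∀ α β, gsConsO σ α β → (α, β) ∈ W

/-- `τ` is a winning strategy for Player I in the Gale-Stewart game with winning condition `W`. -/
def gsWinI (W : Set ((ℕ → A) × (ℕ → B))) (τ : List B → A) : Prop :=
  ∀ α β, gsConsI τ α β → (α, β) ∉ W

/-- The infinite word `u 0 · u 1 · u 2 ⋯` built by Player I in a delay game
(well-defined at position `n` as soon as the first `n+1` blocks have more than `n` letters). -/
def outcomeI [Inhabited I] (u : ℕ → List I) : ℕ → I := fun n =>
  ((List.ofFn fun j : Fin (n + 1) => u j).flatten).getD n default

/-- The word `v 0 ⋯ v (i-1)` of the first `i` letters of `v`. -/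
def prefixW (v : ℕ → O) (i : ℕ) : List O := List.ofFn fun j : Fin i => v j

/-- The concatenation `u 0 · u 1 ⋯ u i` of Player I's moves up to round `i`. -/
def inputsUpTo (u : ℕ → List I) (i : ℕ) : List I :=
  (List.ofFn fun j : Fin (i + 1) => u j).flatten

/-- `τ : Σ_O^* → Σ_I^*` is a (syntactically valid) Player I strategy for the
delay game `Γ_f(L)`: it answers with `f i` letters in round `i`. -/
def delayStratI (f : ℕ → ℕ) (τ : List O → List I) : Prop :=
  ∀ w : List O, (τ w).length = f w.length

/-- `τ` is winning for Player I in the delay game `Γ_f(L)`. -/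
def delayWinI [Inhabited I] (f : ℕ → ℕ) (L : Set ((ℕ → I) × (ℕ → O)))
    (τ : List O → List I) : Prop :=
  ∀ (u : ℕ → List I) (v : ℕ → O), (∀ i, (u i).length = f i) →
    (∀ i, u i = τ (prefixW v i)) → (outcomeI u, v) ∉ L

/-- `σ : Σ_I^* → Σ_O` is winning for Player O in the delay game `Γ_f(L)`. -/
def delayWinO [Inhabited I] (f : ℕ → ℕ) (L : Set ((ℕ → I) × (ℕ → O)))
    (σ : List I → O) : Prop :=
  ∀ (u : ℕ → List I) (v : ℕ → O), (∀ i, (u i).length = f i) →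
    (∀ i, v i = σ (inputsUpTo u i)) → (outcomeI u, v) ∈ L

/-- A round-counting strategy `σ : Σ_I^* × ℕ → Σ_O` is winning for Player O in `Γ_f(L)`:
in round `i` Player O plays `σ (u 0 ⋯ u i) i`. -/
def rcWinO [Inhabited I] (f : ℕ → ℕ) (L : Set ((ℕ → I) × (ℕ → O)))
    (σ : List I → ℕ → O) : Prop :=
  ∀ (u : ℕ → List I) (v : ℕ → O), (∀ i, (u i).length = f i) →
    (∀ i, v i = σ (inputsUpTo u i) i) → (outcomeI u, v) ∈ L

/-- An output-tracking strategy `τ : Σ_O^* → Σ_I^ω` is winning for Player I in `Γ_f(L)`: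
in round `i` Player I plays the length-`f i` prefix of `τ (v 0 ⋯ v (i-1))`. -/
def otWinI [Inhabited I] (f : ℕ → ℕ) (L : Set ((ℕ → I) × (ℕ → O)))
    (τ : List O → ℕ → I) : Prop :=
  ∀ (u : ℕ → List I) (v : ℕ → O),
    (∀ i, u i = List.ofFn fun j : Fin (f i) => τ (prefixW v i) j) →
    (outcomeI u, v) ∉ L

/-- A lookahead-counting strategy `τ : Σ_O^* × ℕ → Σ_I^ω` is winning for Player I in `Γ_f(L)`:
in round `i` Player I plays the length-`f i` prefix of `τ (v 0 ⋯ v (i-1), Σ_{j<i} f j)`. -/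
def lcWinI [Inhabited I] (f : ℕ → ℕ) (L : Set ((ℕ → I) × (ℕ → O)))
    (τ : List O → ℕ → ℕ → I) : Prop :=
  ∀ (u : ℕ → List I) (v : ℕ → O),
    (∀ i, u i = List.ofFn fun j : Fin (f i) =>
      τ (prefixW v i) (∑ k ∈ Finset.range i, f k) j) →
    (outcomeI u, v) ∉ L

/-- A history-tracking strategy `τ : Σ_O^* × (ℕ_{>0})^* → Σ_I^ω` is winning for Player I
in `Γ_f(L)`: in round `i` Player I plays the length-`f i` prefix of
`τ (v 0 ⋯ v (i-1), f 0 ⋯ f (i-1))`. -/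
def htWinI [Inhabited I] (f : ℕ → ℕ) (L : Set ((ℕ → I) × (ℕ → O)))
    (τ : List O → List ℕ → ℕ → I) : Prop :=
  ∀ (u : ℕ → List I) (v : ℕ → O),
    (∀ i, u i = List.ofFn fun j : Fin (f i) => τ (prefixW v i) (prefixW f i) j) →
    (outcomeI u, v) ∉ L

/-- `f ⊑ f'` : in every round, the lookahead granted by `f'` is at least that granted by `f`. -/
def delayLE (f f' : ℕ → ℕ) : Prop :=
  ∀ i, (∑ j ∈ Finset.range (i + 1), f j) ≤ ∑ j ∈ Finset.range (i + 1), f' j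

end DelayGames
/-- if `L` is open (i.e. in `Σ_1`), then `shift_f(L)` is in `Π_2`, i.e. Gδ. -/
theorem stmt1 {I O : Type} [Fintype I] [Fintype O]
    [TopologicalSpace I] [DiscreteTopology I]
    [TopologicalSpace O] [DiscreteTopology O]
    [TopologicalSpace (Option O)] [DiscreteTopology (Option O)]
    (f : ℕ → ℕ) (hf : ∀ i, 0 < f i)
    (L : Set ((ℕ → I) × (ℕ → O))) (hL : IsOpen L) :
    IsGδ (shiftLang f L) := by
  rcases isEmpty_or_nonempty O with hO | hO
  · have he : shiftLang f L = ∅ := by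
      ext p
      simp only [shiftLang, Set.mem_setOf_eq, Set.mem_empty_iff_false, iff_false]
      rintro ⟨β, -, -⟩
      exact hO.elim (β 0)
    rw [he]
    exact IsGδ.empty
  · have : Inhabited O := Classical.inhabited_of_nonempty hO
    set S : ℕ → ℕ := fun i => ∑ j ∈ Finset.range (i + 1), f j with hS
    have hSmono : StrictMono S := strictMono_nat_of_lt_succ fun i => by
      simp only [hS, Finset.sum_range_succ]
      exact Nat.lt_add_of_pos_right (hf (i + 1))
    set Ψ : (ℕ → I) × (ℕ → Option O) → (ℕ → I) × (ℕ → O) :=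
      fun p => (p.1, fun i => (p.2 (S i - 1)).getD default) with hΨdef
    have hΨ : Continuous Ψ := by
      refine Continuous.prodMk continuous_fst (continuous_pi fun i => ?_)
      exact (continuous_of_discreteTopology (f := fun x : Option O => x.getD default)).comp
        ((continuous_apply _).comp continuous_snd)
    have hSn : ∀ i, S i - 1 + 1 = S i := fun i =>
      Nat.succ_pred_eq_of_pos (lt_of_lt_of_le (hf 0) (by
        simpa [hS] using hSmono.monotone (Nat.zero_le i)))
    have key : shiftLang f L =
        (⋂ n, {p : (ℕ → I) × (ℕ → Option O) | (p.2 n).isSome ↔ ∃ i, S i = n + 1})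
          ∩ Ψ ⁻¹' L := by
      ext p
      simp only [shiftLang, Set.mem_setOf_eq, Set.mem_inter_iff, Set.mem_iInter,
        Set.mem_preimage]
      constructor
      · rintro ⟨β, hβL, hp2⟩
        have hsome : ∀ n, (p.2 n).isSome ↔ ∃ i, S i = n + 1 := by
          intro n
          rw [hp2]
          unfold shiftSeq
          by_cases h : ∃ i, (∑ j ∈ Finset.range (i + 1), f j) = n + 1
          · simp only [h, dif_pos]
            simpa using h
          · simp only [h, dif_neg]
            simpa using h
        have hΨβ : (fun i => (p.2 (S i - 1)).getD default) = β := by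
          funext i
          rw [hp2]
          unfold shiftSeq
          have h : ∃ j, (∑ k ∈ Finset.range (j + 1), f k) = (S i - 1) + 1 :=
            ⟨i, by rw [hSn i]⟩
          rw [dif_pos h]
          have hfind : Nat.find h = i := by
            have h1 : S (Nat.find h) = S i - 1 + 1 := Nat.find_spec h
            exact hSmono.injective (h1.trans (hSn i))
          rw [hfind]
          rfl
        refine ⟨hsome, ?_⟩
        show (p.1, fun i => (p.2 (S i - 1)).getD default) ∈ L
        rw [hΨβ]
        exact hβL
      · rintro ⟨hsome, hΨL⟩
        refine ⟨fun i => (p.2 (S i - 1)).getD default, hΨL, ?_⟩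
        have : p.2 = shiftSeq f fun i => (p.2 (S i - 1)).getD default := by
          funext n
          unfold shiftSeq
          by_cases h : ∃ i, (∑ j ∈ Finset.range (i + 1), f j) = n + 1
          · rw [dif_pos h]
            have hspec : S (Nat.find h) = n + 1 := Nat.find_spec h
            have hn : S (Nat.find h) - 1 = n := by omega
            have hs : (p.2 n).isSome := (hsome n).2 h
            obtain ⟨a, ha⟩ := Option.isSome_iff_exists.mp hs
            simp only [hn, ha, Option.getD_some]
          · rw [dif_neg h]
            have : ¬(p.2 n).isSome := fun hs => h ((hsome n).1 hs)
            exact Option.not_isSome_iff_eq_none.mp this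
        exact this
    rw [key]
    refine IsGδ.inter (IsGδ.iInter fun n => IsOpen.isGδ ?_) (hL.preimage hΨ).isGδ
    have : ({p : (ℕ → I) × (ℕ → Option O) | (p.2 n).isSome ↔ ∃ i, S i = n + 1})
        = (fun p : (ℕ → I) × (ℕ → Option O) => p.2 n) ⁻¹'
          {x : Option O | x.isSome ↔ ∃ i, S i = n + 1} := rfl
    rw [this]
    exact (isOpen_discrete _).preimage ((continuous_apply n).comp continuous_snd)
end

section
/- If L ⊆ (Σ_I × Σ_O)^ω is a Borel set, then for every delay function f, the language shift_f(L) ⊆ (Σ_I × (Σ_O ∪ {▷}))^ω is Borel. More precisely, by transfinite induction: if L ∈ Σ_α then shift_f(L) ∈ Σ_{α+2}, and if L ∈ Π_α then shift_f(L) ∈ Π_{α+2}. -/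
open scoped Classical MeasureTheory

/-- The Borel hierarchy over a topological space: `SigLevel 1` is the class of open
sets, and for `α > 1`, `SigLevel α` is the class of countable unions of sets whose
complement lies in `SigLevel β` for some `0 < β < α` (i.e. of `Π_β` sets).
Membership of `s` in `Π_α` is expressed as `sᶜ ∈ SigLevel α`. -/
noncomputable def SigLevel {X : Type} [TopologicalSpace X] : Ordinal → Set (Set X) :=
  Ordinal.lt_wf.fix fun α IH =>
    if α = 1 then {s | IsOpen s}
    else {s | ∃ (g : ℕ → Set X) (b : ℕ → Ordinal) (hb : ∀ n, b n < α),
      (∀ n, b n ≠ 0 ∧ (g n)ᶜ ∈ IH (b n) (hb n)) ∧ s = ⋃ n, g n}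

/-!
Write `S i = f 0 + ⋯ + f i`. As `f` is positive, `S` is strictly increasing, so a word `γ` is
`shift_f(β)` exactly when its letters sit precisely at the positions `S i - 1` and
`β i = γ (S i - 1)`. Hence `shift_f(L)` is the preimage of `L` under the continuous map reading
off these positions, intersected with the closed set of words with this pattern of letters.
Continuous preimages stay in `Σ_α`, and the levels are monotone (open sets being `F_σ`), so
intersecting with a closed set, or taking the union with an open set, lands in `Σ_{α+2}`.
-/

section SigLevel

open Set

variable {X Y : Type} [TopologicalSpace X] [TopologicalSpace Y]

theorem sigLevel_one : SigLevel (X := X) 1 = {s | IsOpen s} := by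
  unfold SigLevel
  rw [WellFounded.fix_eq, if_pos rfl]

theorem sigLevel_of_ne_one {α : Ordinal} (hα : α ≠ 1) :
    SigLevel (X := X) α = {s | ∃ (g : ℕ → Set X) (b : ℕ → Ordinal) (_ : ∀ n, b n < α),
      (∀ n, b n ≠ 0 ∧ (g n)ᶜ ∈ SigLevel (b n)) ∧ s = ⋃ n, g n} := by
  unfold SigLevel
  rw [WellFounded.fix_eq, if_neg hα]

theorem mem_sigLevel_of_compl_mem {s : Set X} {β γ : Ordinal} (hβ : β ≠ 0) (hβγ : β < γ)
    (hs : sᶜ ∈ SigLevel β) : s ∈ SigLevel γ := by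
  have hγ : 1 < γ := (Order.one_le_iff_ne_zero.mpr hβ).trans_lt hβγ
  rw [sigLevel_of_ne_one hγ.ne']
  exact ⟨fun _ => s, fun _ => β, fun _ => hβγ, fun _ => ⟨hβ, hs⟩, (iUnion_const s).symm⟩

theorem IsClosed.mem_sigLevel {s : Set X} (hs : IsClosed s) {γ : Ordinal} (hγ : 1 < γ) :
    s ∈ SigLevel γ :=
  mem_sigLevel_of_compl_mem one_ne_zero hγ (by rw [sigLevel_one]; exact hs.isOpen_compl)

theorem Ordinal.one_lt_add_two (α : Ordinal) : 1 < α + 2 :=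
  one_lt_two.trans_le le_add_self

theorem iUnion_mem_sigLevel {ι : Type*} [Countable ι] [Nonempty ι] {α : Ordinal}
    (hα : α ≠ 1) {s : ι → Set X} (hs : ∀ i, s i ∈ SigLevel α) :
    ⋃ i, s i ∈ SigLevel α := by
  simp only [sigLevel_of_ne_one hα, mem_ofPred_eq] at hs ⊢
  choose g b hb hgb hs using hs
  obtain ⟨e, he⟩ := exists_surjective_nat (ι × ℕ)
  refine ⟨fun k => g (e k).1 (e k).2, fun k => b (e k).1 (e k).2, fun k => hb _ _,
    fun k => hgb _ _, ?_⟩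
  rw [he.iUnion_comp fun p => g p.1 p.2, iUnion_prod']
  exact iUnion_congr hs

theorem union_mem_sigLevel {α : Ordinal} {s t : Set X} (hs : s ∈ SigLevel α)
    (ht : t ∈ SigLevel α) : s ∪ t ∈ SigLevel α := by
  rcases eq_or_ne α 1 with rfl | hα
  · rw [sigLevel_one] at *
    exact IsOpen.union hs ht
  · rw [union_eq_iUnion]
    exact iUnion_mem_sigLevel hα (Bool.forall_bool.2 ⟨ht, hs⟩)

theorem sigLevel_mono [PerfectlyNormalSpace X] {α γ : Ordinal} (hαγ : α ≤ γ) :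
    SigLevel (X := X) α ⊆ SigLevel γ := by
  intro s hs
  rcases hαγ.eq_or_lt with rfl | hlt
  · exact hs
  rcases eq_or_ne α 1 with rfl | hα
  · rw [sigLevel_one] at hs
    obtain ⟨U, hU, hsU⟩ := hs.isClosed_compl.isGδ.eq_iInter_nat
    rw [← compl_compl s, hsU, compl_iInter]
    exact iUnion_mem_sigLevel hlt.ne' fun n => (hU n).isClosed_compl.mem_sigLevel hlt
  · rw [sigLevel_of_ne_one hα] at hs
    obtain ⟨g, b, hb, hgb, rfl⟩ := hs
    have hγ : 1 < γ := (Order.one_le_iff_ne_zero.mpr (hgb 0).1).trans_lt ((hb 0).trans hlt)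
    exact iUnion_mem_sigLevel hγ.ne' fun n =>
      mem_sigLevel_of_compl_mem (hgb n).1 ((hb n).trans hlt) (hgb n).2

theorem IsOpen.mem_sigLevel [PerfectlyNormalSpace X] {s : Set X} (hs : IsOpen s) {γ : Ordinal}
    (hγ : 1 ≤ γ) : s ∈ SigLevel γ :=
  sigLevel_mono hγ (by rwa [sigLevel_one])

theorem inter_mem_sigLevel [PerfectlyNormalSpace X] {α : Ordinal} {s t : Set X}
    (hs : s ∈ SigLevel α) (ht : t ∈ SigLevel α) : s ∩ t ∈ SigLevel α := by
  rcases eq_or_ne α 1 with rfl | hα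
  · rw [sigLevel_one] at *
    exact IsOpen.inter hs ht
  rw [sigLevel_of_ne_one hα] at hs ht
  obtain ⟨g, b, hb, hgb, rfl⟩ := hs
  obtain ⟨g', b', hb', hgb', rfl⟩ := ht
  rw [iUnion_inter_iUnion, ← iUnion_prod' fun p => g p.1 ∩ g' p.2]
  refine iUnion_mem_sigLevel hα fun p =>
    mem_sigLevel_of_compl_mem (β := max (b p.1) (b' p.2)) ?_ (max_lt (hb _) (hb' _)) ?_
  · exact ((pos_iff_ne_zero.2 (hgb p.1).1).trans_le (le_max_left _ _)).ne'
  · rw [compl_inter]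
    exact union_mem_sigLevel (sigLevel_mono (le_max_left _ _) (hgb _).2)
      (sigLevel_mono (le_max_right _ _) (hgb' _).2)

theorem preimage_mem_sigLevel {φ : Y → X} (hφ : Continuous φ) {α : Ordinal} {s : Set X}
    (hs : s ∈ SigLevel α) : φ ⁻¹' s ∈ SigLevel α := by
  induction α using WellFoundedLT.induction generalizing s with
  | _ α ih =>
  rcases eq_or_ne α 1 with rfl | hα
  · rw [sigLevel_one] at *
    exact hs.preimage hφ
  rw [sigLevel_of_ne_one hα] at hs ⊢
  obtain ⟨g, b, hb, hgb, rfl⟩ := hs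
  exact ⟨fun n => φ ⁻¹' g n, b, hb, fun n => ⟨(hgb n).1, ih _ (hb n) (hgb n).2⟩,
    preimage_iUnion⟩

end SigLevel

section Shift

open Finset

variable {I O : Type} (f : ℕ → ℕ)

def shiftPattern : Set (ℕ → Option O) :=
  {γ | ∀ n, (γ n).isSome ↔ ∃ i, ∑ j ∈ range (i + 1), f j = n + 1}

/-- `d` is a placeholder, read only at positions of `γ` carrying `▷`. -/
def unshift (d : O) (γ : ℕ → Option O) : ℕ → O :=
  fun i => (γ (∑ j ∈ range (i + 1), f j - 1)).getD d

variable {f}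

theorem strictMono_sum_range_succ (hf : ∀ i, 0 < f i) :
    StrictMono fun i => ∑ j ∈ range (i + 1), f j :=
  strictMono_nat_of_lt_succ fun i => by
    rw [sum_range_succ _ (i + 1)]
    exact Nat.lt_add_of_pos_right (hf _)

theorem shiftSeq_of_sum_eq (hf : ∀ i, 0 < f i) (β : ℕ → O) {n i : ℕ}
    (h : ∑ j ∈ range (i + 1), f j = n + 1) : shiftSeq f β n = some (β i) := by
  have hex : ∃ k, ∑ j ∈ range (k + 1), f j = n + 1 := ⟨i, h⟩
  rw [shiftSeq, dif_pos hex,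
    (strictMono_sum_range_succ hf).injective ((Nat.find_spec hex).trans h.symm)]

theorem shiftSeq_of_not_exists (β : ℕ → O) {n : ℕ}
    (h : ¬∃ i, ∑ j ∈ range (i + 1), f j = n + 1) : shiftSeq f β n = none := by
  rw [shiftSeq, dif_neg h]

theorem eq_shiftSeq_iff (hf : ∀ i, 0 < f i) (d : O) {γ : ℕ → Option O} {β : ℕ → O} :
    γ = shiftSeq f β ↔ γ ∈ shiftPattern f ∧ unshift f d γ = β := by
  have hsub : ∀ i, ∑ j ∈ range (i + 1), f j - 1 + 1 = ∑ j ∈ range (i + 1), f j := fun i =>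
    Nat.sub_add_cancel (sum_pos (fun j _ => hf j) nonempty_range_add_one)
  constructor
  · rintro rfl
    refine ⟨fun n => ?_, funext fun i => ?_⟩
    · by_cases h : ∃ i, ∑ j ∈ range (i + 1), f j = n + 1
      · obtain ⟨i, hi⟩ := h
        simpa [shiftSeq_of_sum_eq hf β hi] using ⟨i, hi⟩
      · simp [shiftSeq_of_not_exists β h, h]
    · simp [unshift, shiftSeq_of_sum_eq hf β (hsub i).symm]
  · rintro ⟨hγ, rfl⟩
    funext n
    by_cases h : ∃ i, ∑ j ∈ range (i + 1), f j = n + 1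
    · obtain ⟨i, hi⟩ := h
      obtain ⟨a, ha⟩ := Option.isSome_iff_exists.mp ((hγ n).mpr ⟨i, hi⟩)
      rw [shiftSeq_of_sum_eq hf _ hi, unshift, hi, Nat.add_sub_cancel, ha, Option.getD_some]
    · rw [shiftSeq_of_not_exists _ h]
      exact Option.not_isSome_iff_eq_none.mp fun hs => h ((hγ n).mp hs)

theorem shiftLang_eq_preimage_inter (hf : ∀ i, 0 < f i) (d : O)
    (L : Set ((ℕ → I) × (ℕ → O))) :
    shiftLang f L =
      (fun p => (p.1, unshift f d p.2)) ⁻¹' L ∩ Prod.snd ⁻¹' shiftPattern f := by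
  ext p
  simp only [shiftLang, Set.mem_ofPred_eq, Set.mem_inter_iff, Set.mem_preimage,
    eq_shiftSeq_iff hf d]
  constructor
  · rintro ⟨β, hL, hp, rfl⟩
    exact ⟨hL, hp⟩
  · rintro ⟨hL, hp⟩
    exact ⟨_, hL, hp, rfl⟩

theorem shiftLang_of_isEmpty [IsEmpty O] (L : Set ((ℕ → I) × (ℕ → O))) :
    shiftLang f L = ∅ :=
  Set.eq_empty_of_forall_notMem fun _ ⟨β, _⟩ => isEmptyElim (β 0)

variable (f) [TopologicalSpace (Option O)] [DiscreteTopology (Option O)]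

theorem continuous_unshift [TopologicalSpace O] (d : O) : Continuous (unshift f d) :=
  continuous_pi fun _ =>
    (continuous_of_discreteTopology (f := fun o : Option O => o.getD d)).comp (continuous_apply _)

theorem isClosed_shiftPattern : IsClosed (shiftPattern (O := O) f) := by
  simp only [shiftPattern, Set.ofPred_forall]
  exact isClosed_iInter fun n =>
    (isClosed_discrete {o : Option O | o.isSome ↔ ∃ i, ∑ j ∈ range (i + 1), f j = n + 1}
      ).preimage (continuous_apply (A := fun _ : ℕ => Option O) n)

end Shift

theorem stmt2_general {I O : Type}
    [TopologicalSpace I] [DiscreteTopology I]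
    [TopologicalSpace O]
    [TopologicalSpace (Option O)] [DiscreteTopology (Option O)]
    (f : ℕ → ℕ) (hf : ∀ i, 0 < f i) (L : Set ((ℕ → I) × (ℕ → O))) :
    (MeasurableSet[borel ((ℕ → I) × (ℕ → O))] L →
      MeasurableSet[borel ((ℕ → I) × (ℕ → Option O))] (shiftLang f L)) ∧
    (∀ α : Ordinal, L ∈ SigLevel α → shiftLang f L ∈ SigLevel (α + 2)) ∧
    (∀ α : Ordinal, Lᶜ ∈ SigLevel α → (shiftLang f L)ᶜ ∈ SigLevel (α + 2)) := by
  rcases isEmpty_or_nonempty O with hO | ⟨⟨d⟩⟩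
  · rw [shiftLang_of_isEmpty, Set.compl_empty]
    exact ⟨fun _ => @MeasurableSet.empty _ (borel _),
      fun α _ => isClosed_empty.mem_sigLevel α.one_lt_add_two,
      fun α _ => isClosed_univ.mem_sigLevel α.one_lt_add_two⟩
  have hΦ : Continuous fun p : (ℕ → I) × (ℕ → Option O) => (p.1, unshift f d p.2) :=
    continuous_fst.prodMk ((continuous_unshift f d).comp continuous_snd)
  have hC := (isClosed_shiftPattern (O := O) f).preimage (continuous_snd (X := ℕ → I))
  rw [shiftLang_eq_preimage_inter hf d]
  refine ⟨fun hL => ?_, fun α hL => ?_, fun α hL => ?_⟩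
  · borelize ((ℕ → I) × (ℕ → O)) ((ℕ → I) × (ℕ → Option O))
    exact (hΦ.measurable hL).inter hC.measurableSet
  · exact inter_mem_sigLevel (sigLevel_mono le_self_add (preimage_mem_sigLevel hΦ hL))
      (hC.mem_sigLevel α.one_lt_add_two)
  · rw [Set.compl_inter]
    exact union_mem_sigLevel (sigLevel_mono le_self_add (preimage_mem_sigLevel hΦ hL))
      (hC.isOpen_compl.mem_sigLevel α.one_lt_add_two.le)

/-- if `L` is Borel then `shift_f(L)` is Borel; more precisely,
`L ∈ Σ_α` implies `shift_f(L) ∈ Σ_{α+2}` and `L ∈ Π_α` implies `shift_f(L) ∈ Π_{α+2}`. -/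
theorem stmt2 {I O : Type} [Fintype I] [Fintype O]
    [TopologicalSpace I] [DiscreteTopology I]
    [TopologicalSpace O] [DiscreteTopology O]
    [TopologicalSpace (Option O)] [DiscreteTopology (Option O)]
    (f : ℕ → ℕ) (hf : ∀ i, 0 < f i) (L : Set ((ℕ → I) × (ℕ → O))) :
    (MeasurableSet[borel ((ℕ → I) × (ℕ → O))] L →
      MeasurableSet[borel ((ℕ → I) × (ℕ → Option O))] (shiftLang f L)) ∧
    (∀ α : Ordinal, L ∈ SigLevel α → shiftLang f L ∈ SigLevel (α + 2)) ∧
    (∀ α : Ordinal, Lᶜ ∈ SigLevel α → (shiftLang f L)ᶜ ∈ SigLevel (α + 2)) :=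
  stmt2_general f hf L
end

section
/- If the Gale-Stewart game Γ(shift_f(L)) is determined, then the delay game Γ_f(L) is determined: either Player I or Player O has a winning strategy in Γ_f(L). -/
open scoped Classical MeasureTheory

/-!
Player I's moves `u 0 · u 1 ⋯` in `Γ_f(L)` are cut into blocks of lengths `f i`, and the `i`-th
output of Player O falls exactly at the last position `f 0 + ⋯ + f i - 1` of the `i`-th block, which is
where `shift_f` places the `i`-th non-skip letter. So a play of `Γ(shift_f(L))` is a play of `Γ_f(L)`
read letter by letter: a winning strategy of Player O answers in round `i` what it answers at that
position, and a winning strategy of Player I plays the `i`-th block in one go, feeding the outputs it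
has seen, interspersed with skips, into the Gale-Stewart strategy.
-/

section DelayGameTranslation

variable {I O : Type}

def blockStart (f : ℕ → ℕ) (i : ℕ) : ℕ := ∑ j ∈ Finset.range i, f j

lemma blockStart_succ (f : ℕ → ℕ) (i : ℕ) : blockStart f (i + 1) = blockStart f i + f i :=
  Finset.sum_range_succ f i

lemma strictMono_blockStart {f : ℕ → ℕ} (hf : ∀ i, 0 < f i) : StrictMono (blockStart f) :=
  strictMono_nat_of_lt_succ fun i => by
    rw [blockStart_succ]
    exact Nat.lt_add_of_pos_right (hf i)

lemma ofFn_blockStart_succ (f : ℕ → ℕ) (α : ℕ → I) (i : ℕ) :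
    (List.ofFn fun j : Fin (blockStart f (i + 1)) => α j) =
      (List.ofFn fun j : Fin (blockStart f i) => α j) ++
        List.ofFn fun j : Fin (f i) => α (blockStart f i + j) := by
  have h := blockStart_succ f i
  generalize blockStart f (i + 1) = n at h
  subst h
  exact List.ofFn_add

lemma shiftSeq_of_add_one_eq {f : ℕ → ℕ} (hf : ∀ i, 0 < f i) (β : ℕ → O) {i n : ℕ}
    (hn : n + 1 = blockStart f (i + 1)) : shiftSeq f β n = some (β i) := by
  have h : ∃ i', ∑ j ∈ Finset.range (i' + 1), f j = n + 1 := ⟨i, hn.symm⟩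
  have hfind : blockStart f (Nat.find h + 1) = blockStart f (i + 1) := (Nat.find_spec h).trans hn
  rw [shiftSeq, dif_pos h, Nat.succ_injective ((strictMono_blockStart hf).injective hfind)]

lemma shiftSeq_congr {f : ℕ → ℕ} (hf : ∀ i, 0 < f i) {β γ : ℕ → O} {i n : ℕ}
    (hn : n + 1 < blockStart f (i + 1)) (hβγ : ∀ j < i, β j = γ j) :
    shiftSeq f β n = shiftSeq f γ n := by
  unfold shiftSeq
  split_ifs with h
  · have hfind : blockStart f (Nat.find h + 1) < blockStart f (i + 1) := (Nat.find_spec h).trans_lt hn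
    rw [hβγ _ (Nat.succ_lt_succ_iff.mp ((strictMono_blockStart hf).lt_iff_lt.mp hfind))]
  · rfl

lemma getD_prefixW [Inhabited O] (v : ℕ → O) {i m : ℕ} (hm : m < i) :
    (prefixW v i).getD m default = v m := by
  simp [prefixW, hm]

lemma inputsUpTo_zero (u : ℕ → List I) : inputsUpTo u 0 = u 0 := by
  simp [inputsUpTo]

lemma inputsUpTo_succ (u : ℕ → List I) (i : ℕ) :
    inputsUpTo u (i + 1) = inputsUpTo u i ++ u (i + 1) := by
  rw [inputsUpTo, inputsUpTo, List.ofFn_succ' (fun j : Fin (i + 2) => u j)]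
  simp

lemma length_inputsUpTo {f : ℕ → ℕ} {u : ℕ → List I} (hlen : ∀ i, (u i).length = f i) (i : ℕ) :
    (inputsUpTo u i).length = blockStart f (i + 1) := by
  induction i with
  | zero => simp [inputsUpTo_zero, blockStart, hlen 0]
  | succ n ih => rw [inputsUpTo_succ, List.length_append, ih, hlen, blockStart_succ f (n + 1)]

lemma inputsUpTo_prefix (u : ℕ → List I) {i m : ℕ} (h : i ≤ m) :
    inputsUpTo u i <+: inputsUpTo u m := by
  induction m, h using Nat.le_induction with
  | base => exact List.prefix_refl _
  | succ n _ ih => exact ih.trans ⟨u (n + 1), (inputsUpTo_succ u n).symm⟩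

lemma outcomeI_eq_getElem [Inhabited I] {f : ℕ → ℕ} (hf : ∀ i, 0 < f i) {u : ℕ → List I}
    (hlen : ∀ i, (u i).length = f i) {i n : ℕ} (hn : n < (inputsUpTo u i).length) :
    outcomeI u n = (inputsUpTo u i)[n] := by
  have hnn : n < (inputsUpTo u n).length := by
    rw [length_inputsUpTo hlen]
    exact (strictMono_blockStart hf).id_le (n + 1)
  show (inputsUpTo u n).getD n default = _
  rw [List.getD_eq_getElem _ _ hnn,
    (inputsUpTo_prefix u (le_max_right i n)).getElem hnn,
    (inputsUpTo_prefix u (le_max_left i n)).getElem hn]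

lemma inputsUpTo_eq_ofFn_outcomeI [Inhabited I] {f : ℕ → ℕ} (hf : ∀ i, 0 < f i)
    {u : ℕ → List I} (hlen : ∀ i, (u i).length = f i) (i : ℕ) :
    inputsUpTo u i = List.ofFn fun j : Fin (blockStart f (i + 1)) => outcomeI u j := by
  apply List.ext_getElem (by rw [length_inputsUpTo hlen, List.length_ofFn])
  intro n hn _
  rw [List.getElem_ofFn, outcomeI_eq_getElem hf hlen hn]

lemma inputsUpTo_of_blocks {f : ℕ → ℕ} {u : ℕ → List I} {α : ℕ → I}
    (hu : ∀ i, u i = List.ofFn fun j : Fin (f i) => α (blockStart f i + j)) (i : ℕ) :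
    inputsUpTo u i = List.ofFn fun j : Fin (blockStart f (i + 1)) => α j := by
  induction i with
  | zero => simp [inputsUpTo_zero, hu 0, blockStart]
  | succ n ih => rw [inputsUpTo_succ, ih, hu, ← ofFn_blockStart_succ]

lemma outcomeI_eq_of_blocks [Inhabited I] {f : ℕ → ℕ} (hf : ∀ i, 0 < f i) {u : ℕ → List I}
    {α : ℕ → I} (hu : ∀ i, u i = List.ofFn fun j : Fin (f i) => α (blockStart f i + j)) :
    outcomeI u = α := by
  funext n
  have hn : n < blockStart f (n + 1) := (strictMono_blockStart hf).id_le (n + 1)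
  show (inputsUpTo u n).getD n default = α n
  rw [inputsUpTo_of_blocks hu, List.getD_eq_getElem _ _ (by simpa using hn), List.getElem_ofFn]

theorem exists_delayWinO_of_gsWinO_shiftLang [Inhabited I] {f : ℕ → ℕ} (hf : ∀ i, 0 < f i)
    {L : Set ((ℕ → I) × (ℕ → O))} {σ' : List I → Option O} (hσ' : gsWinO (shiftLang f L) σ') :
    ∃ σ : List I → O, delayWinO f L σ := by
  have : Inhabited O := ⟨(hσ' (fun _ => default) _ fun _ => rfl).choose 0⟩
  refine ⟨fun w => (σ' w).getD default, fun u v hlen hv => ?_⟩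
  set α := outcomeI u
  obtain ⟨β, hβL, hplay⟩ := hσ' α (fun n => σ' (List.ofFn fun j : Fin (n + 1) => α j)) fun _ => rfl
  suffices v = β by rwa [this]
  funext i
  obtain ⟨n, hn⟩ := Nat.exists_eq_add_one_of_ne_zero
    ((Nat.succ_pos i).trans_le ((strictMono_blockStart hf).id_le _)).ne'
  have hσ'i : σ' (inputsUpTo u i) = some (β i) := by
    rw [← shiftSeq_of_add_one_eq hf β hn.symm, ← hplay, inputsUpTo_eq_ofFn_outcomeI hf hlen, hn]
  simp only [hv, hσ'i, Option.getD_some]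

/-- Padding `w` with `default` is harmless: in round `w.length` only the letters of `w` are read. -/
noncomputable def delayStratOfGS [Inhabited O] (f : ℕ → ℕ) (τ' : List (Option O) → I)
    (w : List O) : List I :=
  List.ofFn fun j : Fin (f w.length) => τ' (List.ofFn fun k : Fin (blockStart f w.length + j) =>
    shiftSeq f (fun m => w.getD m default) k)

lemma delayStratOfGS_prefixW [Inhabited O] {f : ℕ → ℕ} (hf : ∀ i, 0 < f i)
    (τ' : List (Option O) → I) (v : ℕ → O) (i : ℕ) :
    delayStratOfGS f τ' (prefixW v i) = List.ofFn fun j : Fin (f i) =>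
      τ' (List.ofFn fun k : Fin (blockStart f i + j) => shiftSeq f v k) := by
  have hlen : (prefixW v i).length = i := List.length_ofFn
  apply List.ext_getElem (by simp [delayStratOfGS, hlen])
  intro j hj _
  simp only [delayStratOfGS, List.getElem_ofFn]
  congr 1
  apply List.ext_getElem (by simp [hlen])
  intro k hk _
  simp only [List.getElem_ofFn]
  refine shiftSeq_congr hf (i := i) ?_ fun m hm => getD_prefixW v hm
  simp only [List.length_ofFn, hlen, delayStratOfGS] at hk hj
  rw [blockStart_succ]
  omega

theorem exists_delayWinI_of_gsWinI_shiftLang [Inhabited I] {f : ℕ → ℕ} (hf : ∀ i, 0 < f i)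
    {L : Set ((ℕ → I) × (ℕ → O))} {τ' : List (Option O) → I} (hτ' : gsWinI (shiftLang f L) τ') :
    ∃ τ : List O → List I, delayStratI f τ ∧ delayWinI f L τ := by
  cases isEmpty_or_nonempty O with
  | inl hO =>
    exact ⟨fun w => List.replicate (f w.length) default, fun w => List.length_replicate,
      fun _ v _ _ _ => hO.false (v 0)⟩
  | inr hO =>
    have : Inhabited O := Classical.inhabited_of_nonempty hO
    refine ⟨delayStratOfGS f τ', fun w => List.length_ofFn, fun u v _ hu hL => ?_⟩
    set α : ℕ → I := fun n => τ' (List.ofFn fun k : Fin n => shiftSeq f v k)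
    have hout : outcomeI u = α :=
      outcomeI_eq_of_blocks hf fun i => (hu i).trans (delayStratOfGS_prefixW hf τ' v i)
    exact hτ' α (shiftSeq f v) (fun _ => rfl) ⟨v, hout ▸ hL, rfl⟩

end DelayGameTranslation

theorem stmt9_general {I O : Type} [Inhabited I]
    (f : ℕ → ℕ) (hf : ∀ i, 0 < f i) (L : Set ((ℕ → I) × (ℕ → O)))
    (hdet : (∃ σ' : List I → Option O, gsWinO (shiftLang f L) σ') ∨
      (∃ τ' : List (Option O) → I, gsWinI (shiftLang f L) τ')) :
    (∃ σ : List I → O, delayWinO f L σ) ∨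
      (∃ τ : List O → List I, delayStratI f τ ∧ delayWinI f L τ) :=
  hdet.imp (fun ⟨_, hσ'⟩ => exists_delayWinO_of_gsWinO_shiftLang hf hσ')
    fun ⟨_, hτ'⟩ => exists_delayWinI_of_gsWinI_shiftLang hf hτ'

/-- if the Gale-Stewart game `Γ(shift_f(L))` is determined,
then the delay game `Γ_f(L)` is determined. -/
theorem stmt9 {I O : Type} [Fintype I] [Fintype O] [Inhabited I]
    (f : ℕ → ℕ) (hf : ∀ i, 0 < f i) (L : Set ((ℕ → I) × (ℕ → O)))
    (hdet : (∃ σ' : List I → Option O, gsWinO (shiftLang f L) σ') ∨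
      (∃ τ' : List (Option O) → I, gsWinI (shiftLang f L) τ')) :
    (∃ σ : List I → O, delayWinO f L σ) ∨
      (∃ τ : List O → List I, delayStratI f τ ∧ delayWinI f L τ) :=
  stmt9_general f hf L hdet
end

section
/- If Player O has a winning strategy σ' in the Gale-Stewart game Γ(skip(L)), then every 'level' ℓ_i is well-defined: for each i ∈ ℕ there exists a maximal ℓ_i ∈ ℕ such that in every play of Γ(skip(L)) consistent with σ', Player O picks at most i non-▷ symbols during the first ℓ_i rounds. -/
open scoped Classical MeasureTheory

/-- if `σ'` is a winning strategy for Player O in `Γ(skip(L))`, then for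
every `i` there is a maximal `ℓ_i` such that in every play consistent with `σ'`,
Player O picks at most `i` non-skip symbols during the first `ℓ_i` rounds. -/
theorem stmt15 {I O : Type} [Fintype I] [Fintype O] [Inhabited I] [Inhabited O]
    (L : Set ((ℕ → I) × (ℕ → O))) (σ' : List I → Option O)
    (hσ : gsWinO (skipLang L) σ') (i : ℕ) :
    ∃ ℓ : ℕ,
      (∀ (α : ℕ → I) (β : ℕ → Option O), gsConsO σ' α β →
        ((Finset.range ℓ).filter (fun k => (β k).isSome)).card ≤ i) ∧
      ∀ ℓ' : ℕ,
        (∀ (α : ℕ → I) (β : ℕ → Option O), gsConsO σ' α β →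
          ((Finset.range ℓ').filter (fun k => (β k).isSome)).card ≤ i) → ℓ' ≤ ℓ := by
  set P : ℕ → Prop := fun ℓ =>
    ∀ (α : ℕ → I) (β : ℕ → Option O), gsConsO σ' α β →
      ((Finset.range ℓ).filter (fun k => (β k).isSome)).card ≤ i with hP
  -- P is antitone
  have hanti : ∀ {a b : ℕ}, a ≤ b → P b → P a := by
    intro a b hab hb α β hcons
    refine le_trans (Finset.card_le_card ?_) (hb α β hcons)
    exact Finset.filter_subset_filter _ (Finset.range_subset_range.2 hab)
  have hP0 : P 0 := by intro α β _; simp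
  -- a consistent play exists
  set α₀ : ℕ → I := fun _ => default with hα₀
  set β₀ : ℕ → Option O := fun k => σ' (List.ofFn fun j : Fin (k + 1) => α₀ j) with hβ₀
  have hcons : gsConsO σ' α₀ β₀ := fun _ => rfl
  have hinf : {k | (β₀ k).isSome}.Infinite := (hσ α₀ β₀ hcons).1
  -- not all ℓ satisfy P
  have hnotall : ¬ ∀ ℓ, P ℓ := by
    intro hall
    obtain ⟨t, hts, htc⟩ := hinf.exists_subset_card_eq (i + 1)
    have hsub : t ⊆ (Finset.range (t.sup id + 1)).filter (fun k => (β₀ k).isSome) := by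
      intro k hk
      refine Finset.mem_filter.2 ⟨Finset.mem_range.2 ?_, hts hk⟩
      exact Nat.lt_succ_of_le (Finset.le_sup (f := id) hk)
    have := Finset.card_le_card hsub
    have := hall (t.sup id + 1) α₀ β₀ hcons
    omega
  push_neg at hnotall
  have hex : ∃ ℓ, ¬ P ℓ := hnotall
  set m := Nat.find hex with hm
  have hmP : ¬ P m := Nat.find_spec hex
  have hm1 : 1 ≤ m := by
    rcases Nat.eq_zero_or_pos m with h | h
    · exact absurd (h ▸ hP0) hmP
    · exact h
  refine ⟨m - 1, ?_, ?_⟩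
  · have : m - 1 < m := by omega
    have := Nat.find_min hex this
    simpa [hP] using not_not.mp this
  · intro ℓ' hℓ'
    by_contra hlt
    exact hmP (hanti (by omega) hℓ')
end

section
/- If Player O has a winning strategy in the Gale-Stewart game Γ(skip(L)), then there exists a delay function f such that Player O has a winning strategy in the delay game Γ_f(L). -/
open scoped Classical MeasureTheory

section Stmt16Proof

open Nat List

variable {I O : Type} [Inhabited I] [Inhabited O]

/-- The output stream produced by the Gale-Stewart strategy `σ'` against input `α`. -/
noncomputable def gsOut (σ' : List I → Option O) (α : ℕ → I) : ℕ → Option O :=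
  fun k => σ' (List.ofFn fun j : Fin (k + 1) => α j)

lemma gsOut_congr (σ' : List I → Option O) {α α' : ℕ → I} {k : ℕ}
    (h : ∀ j ≤ k, α j = α' j) : gsOut σ' α k = gsOut σ' α' k := by
  unfold gsOut
  congr 1
  exact congrArg List.ofFn (funext fun j => h j (Nat.lt_succ_iff.mp j.isLt))

lemma count_congr_of_agree {p q : ℕ → Prop} [DecidablePred p] [DecidablePred q] {n : ℕ}
    (h : ∀ k < n, p k ↔ q k) : Nat.count p n = Nat.count q n := by
  induction n with
  | zero => simp
  | succ n ih =>
    rw [Nat.count_succ, Nat.count_succ, ih (fun k hk => h k (hk.trans (Nat.lt_succ_self n)))]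
    simp [h n (Nat.lt_succ_self n)]

lemma prefix_getD {l₁ l₂ : List I} (h : l₁ <+: l₂) {k : ℕ} (hk : k < l₁.length) (d : I) :
    l₂.getD k d = l₁.getD k d := by
  obtain ⟨t, rfl⟩ := h
  exact List.getD_append _ _ _ _ hk

/-- Key compactness/König lemma: if against every input the strategy output has infinitely
many `some`s, then the number of `some`s seen within a fixed horizon is uniformly unbounded. -/
lemma key_unbounded [Fintype I] (σ' : List I → Option O)
    (hσ : ∀ α : ℕ → I, {k | (gsOut σ' α k).isSome}.Infinite) (m : ℕ) :
    ∃ n, ∀ α : ℕ → I, m ≤ Nat.count (fun k => (gsOut σ' α k).isSome) n := by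
  by_contra hcon
  push_neg at hcon
  -- `Ext p`: for every horizon `n` there is an input extending `p` with few `some`s below `n`.
  set Ext : List I → Prop := fun p => ∀ n, ∃ α : ℕ → I,
    (∀ k < p.length, α k = p.getD k default) ∧
    Nat.count (fun k => (gsOut σ' α k).isSome) n < m with hExt
  have hbase : Ext [] := by
    intro n
    obtain ⟨α, hα⟩ := hcon n
    exact ⟨α, by simp, hα⟩
  have hstep : ∀ p : List I, Ext p → ∃ a : I, Ext (p ++ [a]) := by
    intro p hp
    by_contra hno
    push_neg at hno
    simp only [hExt] at hno
    push_neg at hno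
    choose nn hn using hno
    obtain ⟨NN, hNN⟩ := Finset.exists_le (Finset.univ.image nn)
    obtain ⟨α, hα1, hα2⟩ := hp NN
    refine absurd hα2 (not_lt.mpr ?_)
    have hna : nn (α p.length) ≤ NN := hNN _ (Finset.mem_image_of_mem nn (Finset.mem_univ _))
    refine le_trans (hn (α p.length) α fun k hk => ?_) (Nat.count_monotone _ hna)
    rcases Nat.lt_succ_iff_lt_or_eq.mp (by simpa using hk) with hk' | hk'
    · rw [hα1 k hk', prefix_getD ⟨[α p.length], rfl⟩ hk']
    · subst hk'
      rw [List.getD_eq_getElem _ _ (by simp)]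
      simp
  -- build the bad branch
  let seq : ℕ → {p : List I // Ext p} := fun n =>
    Nat.rec ⟨[], hbase⟩
      (fun _ q => ⟨q.1 ++ [(hstep q.1 q.2).choose], (hstep q.1 q.2).choose_spec⟩) n
  have hlen : ∀ n, (seq n).1.length = n := by
    intro n; induction n with
    | zero => rfl
    | succ n ih => simp only [seq] at ih ⊢; simp [ih]
  have hpref : ∀ n n', n ≤ n' → (seq n).1 <+: (seq n').1 := by
    intro n n' h
    induction n' with
    | zero => rw [Nat.le_zero.mp h]
    | succ n' ih =>
      rcases Nat.lt_succ_iff_lt_or_eq.mp (Nat.lt_succ_of_le h) with h' | h'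
      · exact (ih (Nat.lt_succ_iff.mp h')).trans ⟨_, rfl⟩
      · rw [h']
  set αs : ℕ → I := fun k => (seq (k + 1)).1.getD k default with hαs
  have hαseq : ∀ n k, k < n → (seq n).1.getD k default = αs k := by
    intro n k hk
    exact prefix_getD (hpref (k + 1) n hk)
      (Nat.lt_of_lt_of_eq (Nat.lt_succ_self k) (hlen (k + 1)).symm) default
  have hbound : ∀ n, Nat.count (fun k => (gsOut σ' αs k).isSome) n < m := by
    intro n
    obtain ⟨α, hα1, hα2⟩ := (seq n).2 n
    have : Nat.count (fun k => (gsOut σ' αs k).isSome) n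
        = Nat.count (fun k => (gsOut σ' α k).isSome) n := by
      refine count_congr_of_agree fun k hk => ?_
      rw [gsOut_congr σ' (α := αs) (α' := α) fun j hj => ?_]
      rw [hα1 j (by rw [hlen]; exact lt_of_le_of_lt hj hk), hαseq n j (lt_of_le_of_lt hj hk)]
    rw [this]; exact hα2
  -- contradiction with infinitude
  have hinf := hσ αs
  set p : ℕ → Prop := fun k => (gsOut σ' αs k).isSome
  have := hbound (Nat.nth p m + 1)
  rw [Nat.count_succ] at this
  have hm : Nat.count p (Nat.nth p m) = m := Nat.count_nth_of_infinite hinf m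
  have hpm : p (Nat.nth p m) := Nat.nth_mem_of_infinite hinf m
  rw [hm, if_pos hpm] at this
  omega

end Stmt16Proof

set_option maxHeartbeats 1000000 in
/-- if Player O has a winning strategy in the Gale-Stewart game
`Γ(skip(L))`, then there is a delay function `f` such that she wins `Γ_f(L)`. -/
theorem stmt16 {I O : Type} [Fintype I] [Fintype O] [Inhabited I] [Inhabited O]
    (L : Set ((ℕ → I) × (ℕ → O)))
    (hwin : ∃ σ' : List I → Option O, gsWinO (skipLang L) σ') :
    ∃ f : ℕ → ℕ, (∀ i, 0 < f i) ∧ ∃ σ : List I → O, delayWinO f L σ := by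
  classical
  obtain ⟨σ', hσ'⟩ := hwin
  -- every play consistent with σ' is in skipLang L
  have hplay : ∀ α : ℕ → I, {k | (gsOut σ' α k).isSome}.Infinite ∧
      (α, eraseSkips (gsOut σ' α)) ∈ L := by
    intro α
    exact hσ' α (gsOut σ' α) (fun i => rfl)
  have hσinf : ∀ α : ℕ → I, {k | (gsOut σ' α k).isSome}.Infinite := fun α => (hplay α).1
  choose g hg using fun m => key_unbounded σ' hσinf m
  set f : ℕ → ℕ := fun j => g (j + 1) + 1 with hf
  set N : ℕ → ℕ := fun i => ∑ j ∈ Finset.range (i + 1), f j with hN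
  have hfpos : ∀ i, 0 < f i := fun i => Nat.succ_pos _
  have hNge : ∀ i, g (i + 1) ≤ N i := by
    intro i
    calc g (i + 1) ≤ f i := Nat.le_succ _
      _ ≤ N i := Finset.single_le_sum (f := f) (fun j _ => Nat.zero_le _)
            (Finset.self_mem_range_succ i)
  have hNmono : StrictMono N := by
    intro a b hab
    exact Finset.sum_lt_sum_of_subset
      (by simp [Finset.range_subset]; omega) (i := b)
      (by simp) (by simp; omega) (hfpos b) (fun j _ _ => Nat.zero_le _)
  have hNcount : ∀ (i : ℕ) (α : ℕ → I),
      i + 1 ≤ Nat.count (fun k => (gsOut σ' α k).isSome) (N i) := by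
    intro i α
    exact le_trans (hg (i + 1) α) (Nat.count_monotone _ (hNge i))
  refine ⟨f, hfpos, ?_⟩
  refine ⟨fun w => if h : ∃ j, N j = w.length then
    eraseSkips (gsOut σ' (fun k => w.getD k default)) (Nat.find h) else default, ?_⟩
  intro u v hu hv
  set α : ℕ → I := outcomeI u with hα
  -- lengths
  have hlenflat : ∀ i : ℕ, ((List.ofFn fun j : Fin i => u j).flatten).length
      = ∑ j ∈ Finset.range i, f j := by
    intro i
    rw [List.length_flatten, List.map_ofFn, List.sum_ofFn]
    simp only [Function.comp]
    rw [Fin.sum_univ_eq_sum_range (fun j => (u j).length)]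
    exact Finset.sum_congr rfl fun j _ => hu j
  have hlenIU : ∀ i, (inputsUpTo u i).length = N i := fun i => hlenflat (i + 1)
  have hflatpref : ∀ i i' : ℕ, i ≤ i' →
      (List.ofFn fun j : Fin i => u j).flatten <+: (List.ofFn fun j : Fin i' => u j).flatten := by
    intro i i' h
    obtain ⟨d, rfl⟩ := Nat.exists_eq_add_of_le h
    rw [List.ofFn_add, List.flatten_append]
    exact ⟨_, rfl⟩
  -- agreement between α and the recorded inputs
  have hagree : ∀ i k, k < N i → (inputsUpTo u i).getD k default = α k := by
    intro i k hk
    have hk1 : k < ((List.ofFn fun j : Fin (k + 1) => u j).flatten).length := by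
      rw [hlenflat]
      calc k < k + 1 := Nat.lt_succ_self k
        _ = ∑ _j ∈ Finset.range (k + 1), 1 := by simp
        _ ≤ ∑ j ∈ Finset.range (k + 1), f j := Finset.sum_le_sum fun j _ => hfpos j
    have hα' : α k = ((List.ofFn fun j : Fin (k + 1) => u j).flatten).getD k default := rfl
    have hk2 : k < ((List.ofFn fun j : Fin (i + 1) => u j).flatten).length := by
      rw [hlenflat]; exact hk
    show ((List.ofFn fun j : Fin (i + 1) => u j).flatten).getD k default = α k
    rcases le_total (k + 1) (i + 1) with h | h
    · rw [prefix_getD (hflatpref _ _ h) hk1]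
      exact hα'.symm
    · rw [hα']
      exact (prefix_getD (hflatpref _ _ h) hk2 default).symm
  -- identify v with eraseSkips of the strategy outputs
  have hvk : ∀ i, v i = eraseSkips (gsOut σ' α) i := by
    intro i
    have hex : ∃ j, N j = (inputsUpTo u i).length := ⟨i, (hlenIU i).symm⟩
    have hfind : Nat.find hex = i := by
      have h1 : N (Nat.find hex) = N i := (Nat.find_spec hex).trans (hlenIU i)
      exact hNmono.injective h1
    rw [hv i]
    dsimp only
    rw [dif_pos hex, hfind]
    have hgagree : ∀ k < N i,
        gsOut σ' (fun k' => (inputsUpTo u i).getD k' default) k = gsOut σ' α k := by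
      intro k hk
      exact gsOut_congr σ' fun j hj => hagree i j (lt_of_le_of_lt hj hk)
    have hkq : Nat.nth (fun k => (gsOut σ' α k).isSome) i < N i := by
      by_contra hcon
      have h1 : Nat.count (fun k => (gsOut σ' α k).isSome) (N i)
          ≤ Nat.count (fun k => (gsOut σ' α k).isSome)
              (Nat.nth (fun k => (gsOut σ' α k).isSome) i) :=
        Nat.count_monotone _ (le_of_not_gt hcon)
      rw [Nat.count_nth_of_infinite (hσinf α) i] at h1
      have h2 := hNcount i α
      omega
    set t := Nat.nth (fun k => (gsOut σ' α k).isSome) i with ht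
    have hqmem : (gsOut σ' α t).isSome := Nat.nth_mem_of_infinite (hσinf α) i
    have hpmem : (gsOut σ' (fun k' => (inputsUpTo u i).getD k' default) t).isSome := by
      rw [hgagree t hkq]; exact hqmem
    have hcnt : Nat.count
        (fun k => (gsOut σ' (fun k' => (inputsUpTo u i).getD k' default) k).isSome) t = i := by
      rw [count_congr_of_agree (q := fun k => (gsOut σ' α k).isSome)
        (fun k hk => by rw [hgagree k (hk.trans hkq)]), ht,
        Nat.count_nth_of_infinite (hσinf α) i]
    have hnthp := Nat.nth_count
      (p := fun k => (gsOut σ' (fun k' => (inputsUpTo u i).getD k' default) k).isSome) hpmem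
    rw [hcnt] at hnthp
    unfold eraseSkips
    rw [hnthp, ← ht, hgagree t hkq]
  have hveq : v = eraseSkips (gsOut σ' α) := funext hvk
  rw [hveq]
  exact (hplay α).2
end

section
/- If Player I has a winning strategy in the Gale-Stewart game Γ(skip(L)), then Player I has an omnipotent history-tracking strategy for L: a function τ : Σ_O^* × (ℕ_{>0})^* → Σ_I^ω such that for every delay function f, every play of Γ_f(L) consistent with τ (where Player I's move u_i in round i is the prefix of length f(i) of τ(v_0⋯v_{i-1}, f(0)⋯f(i-1))) has its outcome outside L. -/
open scoped Classical MeasureTheory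

section AuxStmt17

open Finset

/-- Partial sums `S f i = f 0 + ⋯ + f (i-1)`. -/
private def Sf (f : ℕ → ℕ) (i : ℕ) : ℕ := ∑ j ∈ Finset.range i, f j

private lemma Sf_strictMono {f : ℕ → ℕ} (hf : ∀ i, 0 < f i) : StrictMono (Sf f) := by
  apply strictMono_nat_of_lt_succ
  intro n
  simp only [Sf, Finset.sum_range_succ]
  exact Nat.lt_add_of_pos_right (hf n)

private lemma le_Sf {f : ℕ → ℕ} (hf : ∀ i, 0 < f i) (i : ℕ) : i ≤ Sf f i := by
  have h0 : Sf f 0 = 0 := by simp [Sf]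
  have := (Sf_strictMono hf).le_apply (x := i)
  omega

private lemma Sf_succ (f : ℕ → ℕ) (i : ℕ) : Sf f (i + 1) = Sf f i + f i := by
  simp [Sf, Finset.sum_range_succ]

private lemma exists_round {f : ℕ → ℕ} (hf : ∀ i, 0 < f i) (n : ℕ) :
    ∃ i, Sf f i ≤ n ∧ n < Sf f (i + 1) := by
  have hex : ∃ i, n < Sf f (i + 1) := ⟨n, lt_of_lt_of_le (Nat.lt_succ_self n) (le_Sf hf (n + 1))⟩
  refine ⟨Nat.find hex, ?_, Nat.find_spec hex⟩
  rcases Nat.eq_zero_or_pos (Nat.find hex) with h0 | h0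
  · rw [h0]; simpa [Sf] using Nat.zero_le n
  · obtain ⟨j, hj⟩ := Nat.exists_eq_add_of_lt h0
    have := Nat.find_min hex (m := j) (by omega)
    have : Sf f (j + 1) ≤ n := by omega
    calc Sf f (Nat.find hex) = Sf f (j + 1) := by rw [hj]; ring_nf
    _ ≤ n := this

private lemma flatten_ofFn_length {I : Type} (u : ℕ → List I) (m : ℕ) :
    (List.ofFn fun j : Fin m => u j).flatten.length = ∑ j ∈ Finset.range m, (u j).length := by
  induction m with
  | zero => simp
  | succ m ih =>
    rw [List.ofFn_succ', List.concat_eq_append, List.flatten_append, List.length_append,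
      Finset.sum_range_succ, ← ih]
    simp

private lemma flatten_ofFn_prefix {I : Type} (u : ℕ → List I) {m n : ℕ} (h : m ≤ n) :
    (List.ofFn fun j : Fin m => u j).flatten <+: (List.ofFn fun j : Fin n => u j).flatten := by
  induction n with
  | zero => interval_cases m; exact List.prefix_refl _
  | succ n ih =>
    rcases Nat.lt_or_ge m (n + 1) with hm | hm
    · refine (ih (by omega)).trans ?_
      rw [List.ofFn_succ', List.concat_eq_append, List.flatten_append]
      exact ⟨_, rfl⟩
    · have : m = n + 1 := by omega
      subst this; exact List.prefix_refl _

private lemma getD_of_prefix {I : Type} [Inhabited I] {l1 l2 : List I} (h : l1 <+: l2)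
    {n : ℕ} (hn : n < l1.length) : l2.getD n default = l1.getD n default := by
  obtain ⟨t, rfl⟩ := h
  exact List.getD_append _ _ _ _ hn

private lemma outcome_spec {I : Type} [Inhabited I] {f : ℕ → ℕ} (hf : ∀ i, 0 < f i)
    (u : ℕ → List I) (hlen : ∀ i, (u i).length = f i) {i n : ℕ}
    (h1 : Sf f i ≤ n) (h2 : n < Sf f (i + 1)) :
    outcomeI u n = (u i).getD (n - Sf f i) default := by
  have hflen : ∀ m, (List.ofFn fun j : Fin m => u j).flatten.length = Sf f m := by
    intro m
    rw [flatten_ofFn_length]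
    exact Finset.sum_congr rfl fun j _ => hlen j
  have key : outcomeI u n = (List.ofFn fun j : Fin (i + 1) => u j).flatten.getD n default := by
    unfold outcomeI
    rcases le_total (i + 1) (n + 1) with hc | hc
    · exact getD_of_prefix (flatten_ofFn_prefix u hc) (by rw [hflen]; exact h2)
    · exact (getD_of_prefix (flatten_ofFn_prefix u hc)
        (by rw [hflen]; exact lt_of_lt_of_le (Nat.lt_succ_self n) (le_Sf hf (n + 1)))).symm
  have hsplit : (List.ofFn fun j : Fin (i + 1) => u j).flatten
      = (List.ofFn fun j : Fin i => u j).flatten ++ u i := by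
    rw [List.ofFn_succ', List.concat_eq_append, List.flatten_append]
    simp
  rw [key, hsplit, List.getD_append_right _ _ _ _ (by rw [hflen i]; exact h1), hflen i]

end AuxStmt17

private lemma nth_range_eq {g : ℕ → ℕ} (hg : StrictMono g) (n : ℕ) :
    Nat.nth (fun k => ∃ i, g i = k) n = g n := by
  classical
  have hmem : (fun k => ∃ i, g i = k) (g n) := ⟨n, rfl⟩
  have hcount : Nat.count (fun k => ∃ i, g i = k) (g n) = n := by
    rw [Nat.count_eq_card_filter_range]
    have heq : Finset.filter (fun k => ∃ i, g i = k) (Finset.range (g n))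
        = (Finset.range n).image g := by
      ext k
      simp only [Finset.mem_filter, Finset.mem_range, Finset.mem_image]
      constructor
      · rintro ⟨hk, i, rfl⟩
        exact ⟨i, hg.lt_iff_lt.mp hk, rfl⟩
      · rintro ⟨i, hi, rfl⟩
        exact ⟨hg.lt_iff_lt.mpr hi, i, rfl⟩
    rw [heq, Finset.card_image_of_injective _ hg.injective, Finset.card_range]
  have := Nat.nth_count (p := fun k => ∃ i, g i = k) hmem
  rwa [hcount] at this

/-- if Player I has a winning strategy in the Gale-Stewart game
`Γ(skip(L))`, then he has an omnipotent history-tracking strategy for `L`: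
a single `τ : Σ_O^* × (ℕ_{>0})^* → Σ_I^ω` winning in `Γ_f(L)` for every `f`. -/
theorem stmt17 {I O : Type} [Fintype I] [Fintype O] [Inhabited I] [Inhabited O]
    (L : Set ((ℕ → I) × (ℕ → O)))
    (hwin : ∃ τ' : List (Option O) → I, gsWinI (skipLang L) τ') :
    ∃ τ : List O → List ℕ → ℕ → I, ∀ f : ℕ → ℕ, (∀ i, 0 < f i) → htWinI f L τ := by
  classical
  obtain ⟨τ', hτ'⟩ := hwin
  set pβ : List ℕ → List O → ℕ → Option O := fun fs w k =>
    if h : ∃ j, j < fs.length ∧ (∑ m ∈ Finset.range (j + 1), fs.getD m 0) = k + 1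
    then some (w.getD (Nat.find h) default) else none with hpβ
  refine ⟨fun w fs j => τ' (List.ofFn fun k : Fin (fs.sum + j) => pβ fs w k), ?_⟩
  intro f hf u v hu hL
  set β : ℕ → Option O := shiftSeq f v with hβ
  have hSmono := Sf_strictMono hf
  have hSinj : Function.Injective (Sf f) := hSmono.injective
  have hlen : ∀ i, (u i).length = f i := by intro i; rw [hu i]; simp
  have hpre_getD : ∀ i m, m < i → (prefixW f i).getD m 0 = f m := by
    intro i m hm
    rw [prefixW, List.getD_eq_getElem _ _ (by simpa using hm)]
    simp
  have hpre_sum_eq : ∀ i j, j < i →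
      (∑ m ∈ Finset.range (j + 1), (prefixW f i).getD m 0) = Sf f (j + 1) := by
    intro i j hj
    refine Finset.sum_congr rfl fun m hm => hpre_getD i m ?_
    simp only [Finset.mem_range] at hm; omega
  have hpreSum : ∀ i, (prefixW f i).sum = Sf f i := by
    intro i
    rw [prefixW, List.sum_ofFn, Sf]
    exact Fin.sum_univ_eq_sum_range _ _
  have hβiff : ∀ k, (∃ j, (∑ m ∈ Finset.range (j + 1), f m) = k + 1) ↔
      (∃ j, Sf f (j + 1) = k + 1) := by intro k; rfl
  -- the key agreement lemma
  have hkey : ∀ i k, k + 1 < Sf f (i + 1) →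
      pβ (prefixW f i) (prefixW v i) k = β k := by
    intro i k hk
    rw [hβ, hpβ]
    simp only []
    unfold shiftSeq
    by_cases h : ∃ j, (∑ m ∈ Finset.range (j + 1), f m) = k + 1
    · obtain ⟨j0, hj0⟩ := h
      have hj0S : Sf f (j0 + 1) = k + 1 := hj0
      have hj0i : j0 < i := by
        have h2 : Sf f (j0 + 1) < Sf f (i + 1) := by omega
        have := hSmono.lt_iff_lt.mp h2
        omega
      have h' : ∃ j, j < (prefixW f i).length ∧
          (∑ m ∈ Finset.range (j + 1), (prefixW f i).getD m 0) = k + 1 := by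
        refine ⟨j0, by simp [prefixW]; omega, ?_⟩
        rw [hpre_sum_eq i j0 hj0i]; exact hj0S
      have h2 : ∃ j, (∑ m ∈ Finset.range (j + 1), f m) = k + 1 := ⟨j0, hj0⟩
      rw [dif_pos h', dif_pos h2]
      have hf1 : Nat.find h' = j0 := by
        have hs := Nat.find_spec h'
        have hlt : Nat.find h' < i := by
          have := hs.1; simpa [prefixW] using this
        have : Sf f (Nat.find h' + 1) = k + 1 := by
          rw [← hpre_sum_eq i _ hlt]; exact hs.2
        have := hSinj (by rw [this, hj0S] : Sf f (Nat.find h' + 1) = Sf f (j0 + 1))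
        omega
      have hf2 : Nat.find h2 = j0 := by
        have hs : Sf f (Nat.find h2 + 1) = k + 1 := Nat.find_spec h2
        have := hSinj (by rw [hs, hj0S] : Sf f (Nat.find h2 + 1) = Sf f (j0 + 1))
        omega
      rw [hf1, hf2]
      congr 1
      rw [prefixW, List.getD_eq_getElem _ _ (by simpa using hj0i)]
      simp
    · have h' : ¬ ∃ j, j < (prefixW f i).length ∧
          (∑ m ∈ Finset.range (j + 1), (prefixW f i).getD m 0) = k + 1 := by
        rintro ⟨j, hj1, hj2⟩
        have hji : j < i := by simpa [prefixW] using hj1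
        exact h ⟨j, show Sf f (j + 1) = k + 1 by rw [← hpre_sum_eq i j hji]; exact hj2⟩
      rw [dif_neg h', dif_neg h]
  -- consistency of the simulated Gale-Stewart play
  have hcons : gsConsI τ' (outcomeI u) β := by
    intro n
    obtain ⟨i, h1, h2⟩ := exists_round hf n
    have hSsucc := Sf_succ f i
    have hni : n - Sf f i < f i := by omega
    rw [outcome_spec hf u hlen h1 h2, hu i,
      List.getD_eq_getElem _ _ (by simpa using hni), List.getElem_ofFn]
    show τ' (List.ofFn fun k : Fin ((prefixW f i).sum + (n - Sf f i)) =>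
      pβ (prefixW f i) (prefixW v i) k) = τ' (List.ofFn fun j : Fin n => β j)
    congr 1
    apply List.ext_getElem
    · simp only [List.length_ofFn]
      rw [hpreSum i]; omega
    · intro k hk1 hk2
      simp only [List.getElem_ofFn]
      refine hkey i k ?_
      simp only [List.length_ofFn] at hk2
      omega
  -- membership of the simulated play in skipLang L
  set g : ℕ → ℕ := fun i => Sf f (i + 1) - 1 with hg
  have hgS : ∀ i, Sf f (i + 1) = g i + 1 := by
    intro i
    have := le_Sf hf (i + 1)
    simp only [hg]; omega
  have hgmono : StrictMono g := by
    intro a b hab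
    have h1 := hSmono (show a + 1 < b + 1 by omega)
    have h2 := le_Sf hf (a + 1)
    simp only [hg]; omega
  have hβg : ∀ n, β (g n) = some (v n) := by
    intro n
    rw [hβ]
    unfold shiftSeq
    have h : ∃ j, (∑ m ∈ Finset.range (j + 1), f m) = g n + 1 := ⟨n, hgS n⟩
    rw [dif_pos h]
    have hs : Sf f (Nat.find h + 1) = g n + 1 := Nat.find_spec h
    have : Nat.find h = n := by
      have := hSinj (by rw [hs, hgS n] : Sf f (Nat.find h + 1) = Sf f (n + 1))
      omega
    rw [this]
  have hqeq : (fun k => ((β k).isSome = true)) = fun k => ∃ i, g i = k := by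
    funext k
    apply propext
    constructor
    · intro hk
      rw [hβ] at hk
      unfold shiftSeq at hk
      by_cases h : ∃ j, (∑ m ∈ Finset.range (j + 1), f m) = k + 1
      · obtain ⟨j, hj⟩ := h
        refine ⟨j, ?_⟩
        have : Sf f (j + 1) = k + 1 := hj
        rw [hgS j] at this; omega
      · rw [dif_neg h] at hk; simp at hk
    · rintro ⟨i, rfl⟩
      rw [hβg i]; rfl
  have herase : eraseSkips β = v := by
    funext n
    unfold eraseSkips
    have : Nat.nth (fun k => (β k).isSome) n = g n := by
      have : (fun k => ((β k).isSome = true)) = fun k => ∃ i, g i = k := hqeq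
      rw [show (fun k => ((β k).isSome : Prop)) = fun k => ∃ i, g i = k from hqeq]
      exact nth_range_eq hgmono n
    rw [this, hβg n]
    rfl
  have hmem : (outcomeI u, β) ∈ skipLang L := by
    constructor
    · show {k | (β k).isSome}.Infinite
      apply Set.infinite_of_injective_forall_mem (f := g) hgmono.injective
      intro i
      show (β (g i)).isSome = true
      rw [hβg i]; rfl
    · show (outcomeI u, eraseSkips β) ∈ L
      rw [herase]; exact hL
  exact hτ' (outcomeI u) β hcons hmem
end

section
/- Let Σ_I = Σ_O = {a, b} and L_1 = { (α, β) : α ≠ (ab)^ω }. Then Player I has an omnipotent lookahead-counting strategy for L_1 (namely τ(x, n) = (ab)^ω if n is even and (ba)^ω if n is odd), but Player I has no omnipotent output-tracking strategy for L_1: for every function τ : Σ_O^* → Σ_I^ω there exists a delay function f and a play of Γ_f(L_1) consistent with τ whose outcome lies in L_1. -/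
open scoped Classical MeasureTheory

/-- The infinite word `(ab)^ω` over `Σ_I = {a, b}` modeled as `Bool` with `a = true`,
`b = false`; `abFrom n` is its suffix starting at position `n`, so `abFrom 0 = (ab)^ω`
and `abFrom 1 = (ba)^ω`. -/
def abFrom (n : ℕ) : ℕ → Bool := fun k => decide ((n + k) % 2 = 0)

/-- `L_1 = { (α, β) : α ≠ (ab)^ω }`. -/
def L1 : Set ((ℕ → Bool) × (ℕ → Bool)) := {p | p.1 ≠ abFrom 0}

/-!
The lookahead-counting strategy knows how many letters it has already played, so it always
continues `(ab)^ω` exactly where the previous block stopped and the outcome is `(ab)^ω` itself.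
An output-tracking strategy cannot tell whether its first block had length `1` or `2`: against
the same first output letter it opens its second block with the same letter, which lands at
position `1` or `2` of the outcome, and `(ab)^ω` differs there.
-/

section DelayGames

variable {I O : Type}

theorem ofFn_flatten_consecutive_blocks {α : Type*} (f : ℕ → ℕ) (g : ℕ → α) (n : ℕ) :
    (List.ofFn fun i : Fin n =>
      List.ofFn fun j : Fin (f i) => g ((∑ k ∈ Finset.range i, f k) + j)).flatten
      = List.ofFn fun j : Fin (∑ k ∈ Finset.range n, f k) => g j := by
  induction n with
  | zero => simp
  | succ n ih =>
    rw [List.ofFn_succ', List.concat_eq_append, List.flatten_append]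
    simp only [Fin.val_castSucc, Fin.val_last, ih, List.flatten_singleton]
    rw [List.ofFn_congr (Finset.sum_range_succ f n), List.ofFn_add]
    simp

theorem outcomeI_eq_of_consecutive_blocks [Inhabited I] {f : ℕ → ℕ} (hf : ∀ i, 0 < f i)
    (w : ℕ → I) (u : ℕ → List I)
    (hu : ∀ i, u i = List.ofFn fun j : Fin (f i) => w ((∑ k ∈ Finset.range i, f k) + j)) :
    outcomeI u = w := by
  funext n
  have hlen : n < ∑ k ∈ Finset.range (n + 1), f k :=
    calc n < ∑ _k ∈ Finset.range (n + 1), 1 := by simp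
      _ ≤ ∑ k ∈ Finset.range (n + 1), f k := Finset.sum_le_sum fun i _ => hf i
  simp only [outcomeI, hu, ofFn_flatten_consecutive_blocks]
  rw [List.getD_eq_getElem _ _ (by simpa using hlen), List.getElem_ofFn]

theorem exists_outputTracking_outcomeI_ne [Inhabited I] (τ : List O → ℕ → I) (v : ℕ → O)
    {w : ℕ → I} (hw : w 1 ≠ w 2) :
    ∃ f : ℕ → ℕ, (∀ i, 0 < f i) ∧ ∃ u : ℕ → List I,
      (∀ i, u i = List.ofFn fun j : Fin (f i) => τ (prefixW v i) j) ∧ outcomeI u ≠ w := by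
  by_cases h : τ (prefixW v 1) 0 = w 1
  · exact ⟨fun i => if i = 0 then 2 else 1, fun i => by positivity, _, fun _ => rfl,
      fun heq => hw (h.symm.trans (congrFun heq 2))⟩
  · exact ⟨fun _ => 1, fun _ => one_pos, _, fun _ => rfl, fun heq => h (congrFun heq 1)⟩

end DelayGames

/-- Player I has an omnipotent lookahead-counting strategy for `L_1`,
namely `τ(x, n) = (ab)^ω` for even `n` and `(ba)^ω` for odd `n`, but he has no
omnipotent output-tracking strategy for `L_1`. -/
theorem stmt18 :
    (∀ f : ℕ → ℕ, (∀ i, 0 < f i) → lcWinI f L1 (fun _ n => abFrom n)) ∧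
    (∀ τ : List Bool → ℕ → Bool, ∃ f : ℕ → ℕ, (∀ i, 0 < f i) ∧
      ∃ (u : ℕ → List Bool) (v : ℕ → Bool),
        (∀ i, u i = List.ofFn fun j : Fin (f i) => τ (prefixW v i) j) ∧
        (outcomeI u, v) ∈ L1) := by
  constructor
  · intro f hf u v hu hmem
    refine hmem (outcomeI_eq_of_consecutive_blocks hf _ u fun i => ?_)
    simp only [hu i, abFrom, zero_add]
  · intro τ
    obtain ⟨f, hf, u, hu, hne⟩ :=
      exists_outputTracking_outcomeI_ne τ (fun _ => false) (w := abFrom 0) (by decide)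
    exact ⟨f, hf, u, _, hu, hne⟩
end
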